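/- arXiv:2205.00762 — 2 statements merged into one kernel-verified Lean document; each statement's English description precedes it below -/
import Mathlib

section
/- Let F be a CNF formula, let c₁ and c₂ be clauses such that c₁ ∪ c₂ ∈ F, c₁ ∉ F, and let x be a variable not occurring in F. If the clause c₁ ∪ {x} is superredundant in (F \ {c₁ ∪ c₂}) ∪ {c₁ ∪ {x}, c₂ ∪ {¬x}}, then the clause c₁ is superredundant in F ∪ {c₁}. -/
/-- A literal is a propositional variable (indexed by ℕ) with a sign. -/
abbrev Lit : Type := ℕ × Bool

/-- The complementary literal. -/
def negLit (l : Lit) : Lit := (l.1, !l.2)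

/-- A clause is a finite set of literals. -/
abbrev Clause : Type := Finset Lit

/-- A clause is non-tautological: it contains no literal together with its complement. -/
def NonTauto (c : Clause) : Prop := ∀ l ∈ c, negLit l ∉ c

/-- A CNF formula is a finite set of non-tautological clauses. -/
def IsCNF (F : Finset Clause) : Prop := ∀ c ∈ F, NonTauto c

/-- `Resolvent C D E`: the clauses `C = c₁ ∪ {x}` and `D = c₂ ∪ {¬x}` resolve on the
variable `x` into `E = c₁ ∪ c₂`, all three clauses being non-tautological. -/
def Resolvent (C D E : Clause) : Prop :=
  ∃ (x : ℕ) (c₁ c₂ : Clause),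
    (x, true) ∉ c₁ ∧ (x, false) ∉ c₂ ∧
    NonTauto (insert (x, true) c₁) ∧ NonTauto (insert (x, false) c₂) ∧
    NonTauto (c₁ ∪ c₂) ∧
    C = insert (x, true) c₁ ∧ D = insert (x, false) c₂ ∧ E = c₁ ∪ c₂

/-- The resolution closure of a formula: the smallest set of clauses containing `F`
and closed under resolution. -/
inductive ResCn (F : Finset Clause) : Clause → Prop
  | base {c : Clause} : c ∈ F → ResCn F c
  | step {C D E : Clause} : ResCn F C → ResCn F D → Resolvent C D E → ResCn F E

/-- A valuation satisfies a clause if it makes some literal of it true. -/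
def satClause (v : ℕ → Bool) (c : Clause) : Prop := ∃ l ∈ c, v l.1 = l.2

/-- A valuation satisfies a set of clauses if it satisfies every clause in it. -/
def satSet (v : ℕ → Bool) (G : Set Clause) : Prop := ∀ c ∈ G, satClause v c

/-- A set of clauses entails a clause: every valuation satisfying the set satisfies
the clause. -/
def entailsC (G : Set Clause) (c : Clause) : Prop :=
  ∀ v : ℕ → Bool, satSet v G → satClause v c

/-- A formula entails a formula. -/
def entailsF (F G : Finset Clause) : Prop :=
  ∀ v : ℕ → Bool, satSet v (↑F : Set Clause) → satSet v (↑G : Set Clause)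

/-- Two formulae are equivalent if they are satisfied by the same valuations. -/
def equivF (F G : Finset Clause) : Prop :=
  ∀ v : ℕ → Bool, satSet v (↑F : Set Clause) ↔ satSet v (↑G : Set Clause)

/-- A clause `c` of `F` is superredundant in `F` if `ResCn(F) \ {c} ⊨ c`. -/
def SuperRedundant (F : Finset Clause) (c : Clause) : Prop :=
  entailsC ({d | ResCn F d} \ {c}) c

/-- The size of a formula: the total number of literal occurrences in it. -/
def size (F : Finset Clause) : ℕ := ∑ c ∈ F, c.card

/-- The set of variables occurring (positively or negatively) in a formula. -/
def varsF (F : Finset Clause) : Set ℕ := {n | ∃ c ∈ F, ∃ b : Bool, (n, b) ∈ c}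

lemma satClause_mono {v : ℕ → Bool} {c d : Clause} (h : c ⊆ d) (hc : satClause v c) :
    satClause v d := by
  obtain ⟨l, hl, hvl⟩ := hc; exact ⟨l, h hl, hvl⟩

lemma nonTauto_mono {c d : Clause} (h : c ⊆ d) (hd : NonTauto d) : NonTauto c :=
  fun l hl hneg => hd l (h hl) (h hneg)

lemma notMem_insert' {c : Clause} {l m : Lit} (h1 : m ≠ l) (h2 : m ∉ c) : m ∉ insert l c := by
  rw [Finset.mem_insert]; rintro (h | h); exacts [h1 h, h2 h]

lemma resCn_nonTauto {H : Finset Clause} (hH : ∀ c ∈ H, NonTauto c) {d : Clause}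
    (hd : ResCn H d) : NonTauto d := by
  induction hd with
  | base h => exact hH _ h
  | step _ _ hres _ _ =>
    obtain ⟨y, a, b, _, _, _, _, hEn, _, _, hE⟩ := hres; exact hE ▸ hEn

lemma semres {v : ℕ → Bool} {y : ℕ} {a b : Clause}
    (ha : satClause v (insert (y, true) a)) (hb : satClause v (insert (y, false) b)) :
    satClause v (a ∪ b) := by
  obtain ⟨l, hl, hvl⟩ := ha
  rcases Finset.mem_insert.1 hl with rfl | hl
  · obtain ⟨m, hm, hvm⟩ := hb
    rcases Finset.mem_insert.1 hm with rfl | hm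
    · simp at hvl hvm; rw [hvl] at hvm; cases hvm
    · exact ⟨m, Finset.mem_union_right _ hm, hvm⟩
  · exact ⟨l, Finset.mem_union_left _ hl, hvl⟩

lemma res_step {H : Finset Clause} {C D : Clause} {y : ℕ}
    (hC : ResCn H C) (hD : ResCn H D) (hyC : (y, true) ∈ C) (hyD : (y, false) ∈ D)
    (hCn : NonTauto C) (hDn : NonTauto D)
    (hEn : NonTauto (C.erase (y, true) ∪ D.erase (y, false))) :
    ResCn H (C.erase (y, true) ∪ D.erase (y, false)) := by
  refine ResCn.step hC hD ⟨y, C.erase (y, true), D.erase (y, false),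
    Finset.notMem_erase _ _, Finset.notMem_erase _ _, ?_, ?_, hEn, ?_, ?_, rfl⟩
  · rwa [Finset.insert_erase hyC]
  · rwa [Finset.insert_erase hyD]
  · rw [Finset.insert_erase hyC]
  · rw [Finset.insert_erase hyD]

lemma helperB {H : Finset Clause} {y : ℕ} {s t e₁ e₂ : Clause}
    (he₁ : ResCn H e₁) (he₂ : ResCn H e₂)
    (hs : e₁ ⊆ insert (y, true) s) (ht : e₂ ⊆ insert (y, false) t)
    (hn₁ : NonTauto e₁) (hn₂ : NonTauto e₂) (hst : NonTauto (s ∪ t)) :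
    ∃ e, ResCn H e ∧ e ⊆ s ∪ t := by
  by_cases h₁ : (y, true) ∈ e₁
  · by_cases h₂ : (y, false) ∈ e₂
    · have hsub : e₁.erase (y, true) ∪ e₂.erase (y, false) ⊆ s ∪ t := by
        intro l hl
        rcases Finset.mem_union.1 hl with hl | hl
        · have h3 := Finset.mem_erase.1 hl
          rcases Finset.mem_insert.1 (hs h3.2) with h4 | h4
          · exact absurd h4 h3.1
          · exact Finset.mem_union_left _ h4
        · have h3 := Finset.mem_erase.1 hl
          rcases Finset.mem_insert.1 (ht h3.2) with h4 | h4
          · exact absurd h4 h3.1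
          · exact Finset.mem_union_right _ h4
      exact ⟨_, res_step he₁ he₂ h₁ h₂ hn₁ hn₂ (nonTauto_mono hsub hst), hsub⟩
    · refine ⟨e₂, he₂, fun l hl => ?_⟩
      rcases Finset.mem_insert.1 (ht hl) with rfl | h4
      · exact absurd hl h₂
      · exact Finset.mem_union_right _ h4
  · refine ⟨e₁, he₁, fun l hl => ?_⟩
    rcases Finset.mem_insert.1 (hs hl) with rfl | h4
    · exact absurd hl h₁
    · exact Finset.mem_union_left _ h4

def proj (x : ℕ) (d : Clause) : Clause := d.filter (fun l => l.1 ≠ x)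

lemma mem_proj {x : ℕ} {d : Clause} {l : Lit} : l ∈ proj x d ↔ l ∈ d ∧ l.1 ≠ x :=
  Finset.mem_filter

lemma proj_subset {x : ℕ} {d : Clause} : proj x d ⊆ d := Finset.filter_subset _ _

lemma proj_union {x : ℕ} {a b : Clause} : proj x (a ∪ b) = proj x a ∪ proj x b :=
  Finset.filter_union _ _ _

lemma proj_insert_ne {x : ℕ} {l : Lit} {d : Clause} (h : l.1 ≠ x) :
    proj x (insert l d) = insert l (proj x d) := by
  unfold proj; rw [Finset.filter_insert]; simp [h]

lemma proj_insert_eq_x {x : ℕ} {bb : Bool} {d : Clause} :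
    proj x (insert (x, bb) d) = proj x d := by
  unfold proj; rw [Finset.filter_insert]; simp

lemma proj_eq_self {x : ℕ} {d : Clause} (h1 : (x, true) ∉ d) (h2 : (x, false) ∉ d) :
    proj x d = d := by
  apply Finset.filter_eq_self.2
  rintro ⟨n, bb⟩ hl h
  dsimp at h; subst h
  cases bb
  · exact h2 hl
  · exact h1 hl

lemma sat_update_of_sat {v : ℕ → Bool} {x : ℕ} {bb : Bool} {d : Clause}
    (h : satClause v d) (hd : ∀ l ∈ d, l.1 ≠ x) : satClause (Function.update v x bb) d := by
  obtain ⟨l, hl, hvl⟩ := h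
  exact ⟨l, hl, by rw [Function.update_of_ne (hd l hl)]; exact hvl⟩

set_option maxHeartbeats 2000000 in
lemma main_inv (F : Finset Clause) (hF : IsCNF F) (c₁ c₂ : Clause) (h₁ : NonTauto c₁)
    (hmem : c₁ ∪ c₂ ∈ F) (hnot : c₁ ∉ F) (x : ℕ) (hx : x ∉ varsF F)
    (v : ℕ → Bool)
    (hv : ∀ e, ResCn (insert c₁ F) e → e ≠ c₁ → satClause v e)
    (hnc : ¬ satClause v c₁)
    {d : Clause}
    (hd : ResCn ((F.erase (c₁ ∪ c₂)) ∪ {insert (x, true) c₁, insert (x, false) c₂}) d) :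
    ((x, true) ∈ d → (d = insert (x, true) c₁ ∨
        (satClause v (proj x d) ∧ ∃ e, ResCn (insert c₁ F) e ∧ e ⊆ proj x d)))
    ∧ ((x, false) ∈ d → (satClause v (proj x d) ∧
        (NonTauto (c₁ ∪ proj x d) → ∃ e, ResCn (insert c₁ F) e ∧ e ⊆ c₁ ∪ proj x d)))
    ∧ ((x, true) ∉ d → (x, false) ∉ d →
        (satClause v d ∧ ∃ e, ResCn (insert c₁ F) e ∧ e ⊆ d)) := by
  have hfresh : ∀ c ∈ F, ∀ bb : Bool, (x, bb) ∉ c := by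
    intro c hc bb hmem'
    exact hx ⟨c, hc, bb, hmem'⟩
  have hxc₁ : ∀ bb : Bool, (x, bb) ∉ c₁ :=
    fun bb h => hfresh _ hmem bb (Finset.mem_union_left _ h)
  have hxc₂ : ∀ bb : Bool, (x, bb) ∉ c₂ :=
    fun bb h => hfresh _ hmem bb (Finset.mem_union_right _ h)
  have hGnt : ∀ e, ResCn (insert c₁ F) e → NonTauto e := by
    intro e he
    refine resCn_nonTauto ?_ he
    intro c hc
    rcases Finset.mem_insert.1 hc with rfl | hc
    · exact h₁
    · exact hF c hc
  have hc₁G : ResCn (insert c₁ F) c₁ := .base (Finset.mem_insert_self _ _)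
  have hc₁₂G : ResCn (insert c₁ F) (c₁ ∪ c₂) := .base (Finset.mem_insert_of_mem hmem)
  have hne12 : c₁ ∪ c₂ ≠ c₁ := fun h => hnot (h ▸ hmem)
  have hsat2 : satClause v c₂ := by
    obtain ⟨l, hl, hvl⟩ := hv _ hc₁₂G hne12
    rcases Finset.mem_union.1 hl with hl | hl
    · exact absurd ⟨l, hl, hvl⟩ hnc
    · exact ⟨l, hl, hvl⟩
  induction hd with
  | @base d h =>
    rcases Finset.mem_union.1 h with h | h
    · have hd_mem : d ∈ F := Finset.mem_of_mem_erase h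
      have hdx : ∀ bb : Bool, (x, bb) ∉ d := fun bb => hfresh d hd_mem bb
      refine ⟨fun h' => absurd h' (hdx true), fun h' => absurd h' (hdx false), fun _ _ => ?_⟩
      have hdne : d ≠ c₁ := fun h' => hnot (h' ▸ hd_mem)
      exact ⟨hv d (.base (Finset.mem_insert_of_mem hd_mem)) hdne, d,
        .base (Finset.mem_insert_of_mem hd_mem), Finset.Subset.refl d⟩
    · rcases Finset.mem_insert.1 h with rfl | h
      · refine ⟨fun _ => Or.inl rfl, fun h' => ?_,
          fun h' _ => absurd (Finset.mem_insert_self _ _) h'⟩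
        rcases Finset.mem_insert.1 h' with h'' | h''
        · exact absurd h'' (by simp)
        · exact absurd h'' (hxc₁ false)
      · rw [Finset.mem_singleton] at h; subst h
        have hproj : proj x (insert (x, false) c₂) = c₂ := by
          rw [proj_insert_eq_x, proj_eq_self (hxc₂ true) (hxc₂ false)]
        refine ⟨fun h' => ?_, fun _ => ?_,
          fun _ h' => absurd (Finset.mem_insert_self _ _) h'⟩
        · rcases Finset.mem_insert.1 h' with h'' | h''
          · exact absurd h'' (by simp)
          · exact absurd h'' (hxc₂ true)
        · rw [hproj]
          exact ⟨hsat2, fun _ => ⟨c₁ ∪ c₂, hc₁₂G, Finset.Subset.refl _⟩⟩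
  | @step C D E hC hD hres ihC ihD =>
    obtain ⟨y, a, b, hya, hyb, hCn, hDn, hEn, rfl, rfl, rfl⟩ := hres
    by_cases hxy : x = y
    · subst hxy
      have hax : (x, false) ∉ a :=
        fun h => hCn (x, true) (Finset.mem_insert_self _ _) (Finset.mem_insert_of_mem h)
      have hbx : (x, true) ∉ b :=
        fun h => hDn (x, false) (Finset.mem_insert_self _ _) (Finset.mem_insert_of_mem h)
      have hET : (x, true) ∉ a ∪ b := by
        rw [Finset.mem_union]; rintro (h | h); exacts [hya h, hbx h]
      have hEF : (x, false) ∉ a ∪ b := by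
        rw [Finset.mem_union]; rintro (h | h); exacts [hax h, hyb h]
      refine ⟨fun h' => absurd h' hET, fun h' => absurd h' hEF, fun _ _ => ?_⟩
      rcases ihC.1 (Finset.mem_insert_self _ _) with hC1 | ⟨hsata, e₁, he₁, hsub₁⟩
      · have ha : a = c₁ := by
          have h2 := congrArg (fun s => Finset.erase s (x, true)) hC1
          simpa [Finset.erase_insert hya, Finset.erase_insert (hxc₁ true)] using h2
        rw [ha] at hEn ⊢
        obtain ⟨hsatb, hsubb⟩ := ihD.2.1 (Finset.mem_insert_self _ _)
        rw [proj_insert_eq_x, proj_eq_self hbx hyb] at hsatb hsubb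
        exact ⟨satClause_mono Finset.subset_union_right hsatb, hsubb hEn⟩
      · rw [proj_insert_eq_x, proj_eq_self hya hax] at hsata hsub₁
        exact ⟨satClause_mono Finset.subset_union_left hsata, e₁, he₁,
          hsub₁.trans Finset.subset_union_left⟩
    · have hyT : ((y, true) : Lit).1 ≠ x := fun h => hxy h.symm
      have hyF : ((y, false) : Lit).1 ≠ x := fun h => hxy h.symm
      have hneT : ∀ bb : Bool, ((x, bb) : Lit) ≠ (y, true) :=
        fun bb h => hxy (congrArg Prod.fst h)
      have hneF : ∀ bb : Bool, ((x, bb) : Lit) ≠ (y, false) :=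
        fun bb h => hxy (congrArg Prod.fst h)
      by_cases hET : (x, true) ∈ a ∪ b
      · -- Group P : E contains (x, true)
        have hEF : (x, false) ∉ a ∪ b := hEn (x, true) hET
        have haF : (x, false) ∉ a := fun h => hEF (Finset.mem_union_left _ h)
        have hbF : (x, false) ∉ b := fun h => hEF (Finset.mem_union_right _ h)
        have hSC : insert (y, true) a = insert (x, true) c₁ ∨
            (satClause v (insert (y, true) (proj x a)) ∧
              ∃ e, ResCn (insert c₁ F) e ∧ e ⊆ insert (y, true) (proj x a)) := by
          by_cases haT : (x, true) ∈ a
          · have h' := ihC.1 (Finset.mem_insert_of_mem haT)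
            rwa [proj_insert_ne hyT] at h'
          · have h' := ihC.2.2 (notMem_insert' (hneT true) haT)
              (notMem_insert' (hneT false) haF)
            rw [proj_eq_self haT haF]
            exact Or.inr h'
        have hSD : insert (y, false) b = insert (x, true) c₁ ∨
            (satClause v (insert (y, false) (proj x b)) ∧
              ∃ e, ResCn (insert c₁ F) e ∧ e ⊆ insert (y, false) (proj x b)) := by
          by_cases hbT : (x, true) ∈ b
          · have h' := ihD.1 (Finset.mem_insert_of_mem hbT)
            rwa [proj_insert_ne hyF] at h'
          · have h' := ihD.2.2 (notMem_insert' (hneF true) hbT)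
              (notMem_insert' (hneF false) hbF)
            rw [proj_eq_self hbT hbF]
            exact Or.inr h'
        have hstE : NonTauto (proj x a ∪ proj x b) :=
          nonTauto_mono (Finset.union_subset_union proj_subset proj_subset) hEn
        have key : satClause v (proj x a ∪ proj x b) ∧
            ∃ e, ResCn (insert c₁ F) e ∧ e ⊆ proj x a ∪ proj x b := by
          rcases hSC with hC1 | ⟨hsC, e₁, he₁, hsub₁⟩
          · have hyc : (y, true) ∈ c₁ := by
              have h2 : ((y, true) : Lit) ∈ insert (x, true) c₁ := by
                rw [← hC1]; exact Finset.mem_insert_self _ _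
              rcases Finset.mem_insert.1 h2 with h3 | h3
              · exact absurd (congrArg Prod.fst h3).symm hxy
              · exact h3
            have ha_eq : a = insert (x, true) (c₁.erase (y, true)) := by
              have h2 := congrArg (fun s => Finset.erase s (y, true)) hC1
              simp only [Finset.erase_insert hya] at h2
              rw [h2, Finset.erase_insert_of_ne (hneT true)]
            have hpa : proj x a = c₁.erase (y, true) := by
              rw [ha_eq, proj_insert_eq_x,
                proj_eq_self (fun h => hxc₁ true (Finset.mem_of_mem_erase h))
                  (fun h => hxc₁ false (Finset.mem_of_mem_erase h))]
            rcases hSD with hD1 | ⟨hsD, e₂, he₂, hsub₂⟩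
            · have hyc' : (y, false) ∈ c₁ := by
                have h2 : ((y, false) : Lit) ∈ insert (x, true) c₁ := by
                  rw [← hD1]; exact Finset.mem_insert_self _ _
                rcases Finset.mem_insert.1 h2 with h3 | h3
                · exact absurd (congrArg Prod.fst h3).symm hxy
                · exact h3
              exact absurd hyc' (h₁ (y, true) hyc)
            · have hst : NonTauto (c₁.erase (y, true) ∪ proj x b) := by
                rw [← hpa]; exact hstE
              obtain ⟨e, he, hesub⟩ := helperB hc₁G he₂
                (by rw [Finset.insert_erase hyc]) hsub₂ h₁ (hGnt _ he₂) hst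
              have hene : e ≠ c₁ := by
                intro h
                have h2 : ((y, true) : Lit) ∈ c₁.erase (y, true) ∪ proj x b :=
                  hesub (by rw [h]; exact hyc)
                rcases Finset.mem_union.1 h2 with h3 | h3
                · exact (Finset.notMem_erase _ _) h3
                · exact hDn (y, false) (Finset.mem_insert_self _ _)
                    (Finset.mem_insert_of_mem (proj_subset h3))
              refine ⟨satClause_mono (by rw [hpa]; exact hesub) (hv e he hene), e, he, ?_⟩
              rw [hpa]; exact hesub
          · rcases hSD with hD1 | ⟨hsD, e₂, he₂, hsub₂⟩
            · have hyc' : (y, false) ∈ c₁ := by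
                have h2 : ((y, false) : Lit) ∈ insert (x, true) c₁ := by
                  rw [← hD1]; exact Finset.mem_insert_self _ _
                rcases Finset.mem_insert.1 h2 with h3 | h3
                · exact absurd (congrArg Prod.fst h3).symm hxy
                · exact h3
              have hb_eq : b = insert (x, true) (c₁.erase (y, false)) := by
                have h2 := congrArg (fun s => Finset.erase s (y, false)) hD1
                simp only [Finset.erase_insert hyb] at h2
                rw [h2, Finset.erase_insert_of_ne (hneF true)]
              have hpb : proj x b = c₁.erase (y, false) := by
                rw [hb_eq, proj_insert_eq_x,
                  proj_eq_self (fun h => hxc₁ true (Finset.mem_of_mem_erase h))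
                    (fun h => hxc₁ false (Finset.mem_of_mem_erase h))]
              have hst : NonTauto (proj x a ∪ c₁.erase (y, false)) := by
                rw [← hpb]; exact hstE
              obtain ⟨e, he, hesub⟩ := helperB he₁ hc₁G hsub₁
                (by rw [Finset.insert_erase hyc']) (hGnt _ he₁) h₁ hst
              have hene : e ≠ c₁ := by
                intro h
                have h2 : ((y, false) : Lit) ∈ proj x a ∪ c₁.erase (y, false) :=
                  hesub (by rw [h]; exact hyc')
                rcases Finset.mem_union.1 h2 with h3 | h3
                · exact hCn (y, true) (Finset.mem_insert_self _ _)
                    (Finset.mem_insert_of_mem (proj_subset h3))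
                · exact (Finset.notMem_erase _ _) h3
              refine ⟨satClause_mono (by rw [hpb]; exact hesub) (hv e he hene), e, he, ?_⟩
              rw [hpb]; exact hesub
            · exact ⟨semres hsC hsD,
                helperB he₁ he₂ hsub₁ hsub₂ (hGnt _ he₁) (hGnt _ he₂) hstE⟩
        refine ⟨fun _ => Or.inr ?_, fun h' => absurd h' hEF, fun h' _ => absurd hET h'⟩
        rw [proj_union]
        exact key
      · by_cases hEF' : (x, false) ∈ a ∪ b
        · -- Group N : E contains (x, false)
          have haT : (x, true) ∉ a := fun h => hET (Finset.mem_union_left _ h)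
          have hbT : (x, true) ∉ b := fun h => hET (Finset.mem_union_right _ h)
          have hSC : satClause v (insert (y, true) (proj x a)) ∧
              (NonTauto (c₁ ∪ insert (y, true) (proj x a)) →
                ∃ e, ResCn (insert c₁ F) e ∧ e ⊆ c₁ ∪ insert (y, true) (proj x a)) := by
            by_cases haF : (x, false) ∈ a
            · have h' := ihC.2.1 (Finset.mem_insert_of_mem haF)
              rwa [proj_insert_ne hyT] at h'
            · have h' := ihC.2.2 (notMem_insert' (hneT true) haT)
                (notMem_insert' (hneT false) haF)
              rw [proj_eq_self haT haF]
              exact ⟨h'.1, fun _ => h'.2.imp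
                (fun e p => ⟨p.1, p.2.trans Finset.subset_union_right⟩)⟩
          have hSD : satClause v (insert (y, false) (proj x b)) ∧
              (NonTauto (c₁ ∪ insert (y, false) (proj x b)) →
                ∃ e, ResCn (insert c₁ F) e ∧ e ⊆ c₁ ∪ insert (y, false) (proj x b)) := by
            by_cases hbF : (x, false) ∈ b
            · have h' := ihD.2.1 (Finset.mem_insert_of_mem hbF)
              rwa [proj_insert_ne hyF] at h'
            · have h' := ihD.2.2 (notMem_insert' (hneF true) hbT)
                (notMem_insert' (hneF false) hbF)
              rw [proj_eq_self hbT hbF]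
              exact ⟨h'.1, fun _ => h'.2.imp
                (fun e p => ⟨p.1, p.2.trans Finset.subset_union_right⟩)⟩
          refine ⟨fun h' => absurd h' hET, fun _ => ?_, fun _ h' => absurd hEF' h'⟩
          rw [proj_union]
          refine ⟨semres hSC.1 hSD.1, fun hnt => ?_⟩
          by_cases hyFc : (y, false) ∈ c₁
          · have habs : c₁ ∪ insert (y, false) (proj x b) = c₁ ∪ proj x b := by
              ext l
              simp only [Finset.mem_union, Finset.mem_insert]
              constructor
              · rintro (h | h | h)
                · exact Or.inl h
                · exact Or.inl (h ▸ hyFc)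
                · exact Or.inr h
              · rintro (h | h)
                · exact Or.inl h
                · exact Or.inr (Or.inr h)
            have hnt' : NonTauto (c₁ ∪ insert (y, false) (proj x b)) := by
              rw [habs]
              exact nonTauto_mono
                (Finset.union_subset_union_right Finset.subset_union_right) hnt
            obtain ⟨e, he, hesub⟩ := hSD.2 hnt'
            rw [habs] at hesub
            exact ⟨e, he, hesub.trans
              (Finset.union_subset_union_right Finset.subset_union_right)⟩
          · by_cases hyTc : (y, true) ∈ c₁
            · have habs : c₁ ∪ insert (y, true) (proj x a) = c₁ ∪ proj x a := by
                ext l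
                simp only [Finset.mem_union, Finset.mem_insert]
                constructor
                · rintro (h | h | h)
                  · exact Or.inl h
                  · exact Or.inl (h ▸ hyTc)
                  · exact Or.inr h
                · rintro (h | h)
                  · exact Or.inl h
                  · exact Or.inr (Or.inr h)
              have hnt' : NonTauto (c₁ ∪ insert (y, true) (proj x a)) := by
                rw [habs]
                exact nonTauto_mono
                  (Finset.union_subset_union_right Finset.subset_union_left) hnt
              obtain ⟨e, he, hesub⟩ := hSC.2 hnt'
              rw [habs] at hesub
              exact ⟨e, he, hesub.trans
                (Finset.union_subset_union_right Finset.subset_union_left)⟩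
            · have hyBa : (y, false) ∉ proj x a := fun h =>
                hCn (y, true) (Finset.mem_insert_self _ _)
                  (Finset.mem_insert_of_mem (proj_subset h))
              have hyTb : (y, true) ∉ proj x b := fun h =>
                hDn (y, false) (Finset.mem_insert_self _ _)
                  (Finset.mem_insert_of_mem (proj_subset h))
              have hsubCA : c₁ ∪ insert (y, true) (proj x a) ⊆
                  insert (y, true) (c₁ ∪ proj x a) := by
                intro l hl
                rcases Finset.mem_union.1 hl with h | h
                · exact Finset.mem_insert_of_mem (Finset.mem_union_left _ h)
                · rcases Finset.mem_insert.1 h with rfl | h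
                  · exact Finset.mem_insert_self _ _
                  · exact Finset.mem_insert_of_mem (Finset.mem_union_right _ h)
              have hsubDB : c₁ ∪ insert (y, false) (proj x b) ⊆
                  insert (y, false) (c₁ ∪ proj x b) := by
                intro l hl
                rcases Finset.mem_union.1 hl with h | h
                · exact Finset.mem_insert_of_mem (Finset.mem_union_left _ h)
                · rcases Finset.mem_insert.1 h with rfl | h
                  · exact Finset.mem_insert_self _ _
                  · exact Finset.mem_insert_of_mem (Finset.mem_union_right _ h)
              have hCA : NonTauto (insert (y, true) (c₁ ∪ proj x a)) := by
                intro l hl hneg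
                rcases Finset.mem_insert.1 hl with rfl | hl
                · rcases Finset.mem_insert.1 hneg with h | h
                  · exact absurd (congrArg Prod.snd h) (by simp [negLit])
                  · rcases Finset.mem_union.1 h with h | h
                    · exact hyFc h
                    · exact hyBa h
                · rcases Finset.mem_insert.1 hneg with h | h
                  · have hl' : l = (y, false) := by
                      have h2 := congrArg negLit h
                      simpa [negLit] using h2
                    subst hl'
                    rcases Finset.mem_union.1 hl with h' | h'
                    · exact hyFc h'
                    · exact hyBa h'
                  · exact hnt l
                      (Finset.union_subset_union_right Finset.subset_union_left hl)
                      (Finset.union_subset_union_right Finset.subset_union_left h)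
              have hDB : NonTauto (insert (y, false) (c₁ ∪ proj x b)) := by
                intro l hl hneg
                rcases Finset.mem_insert.1 hl with rfl | hl
                · rcases Finset.mem_insert.1 hneg with h | h
                  · exact absurd (congrArg Prod.snd h) (by simp [negLit])
                  · rcases Finset.mem_union.1 h with h | h
                    · exact hyTc h
                    · exact hyTb h
                · rcases Finset.mem_insert.1 hneg with h | h
                  · have hl' : l = (y, true) := by
                      have h2 := congrArg negLit h
                      simpa [negLit] using h2
                    subst hl'
                    rcases Finset.mem_union.1 hl with h' | h'
                    · exact hyTc h'
                    · exact hyTb h'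
                  · exact hnt l
                      (Finset.union_subset_union_right Finset.subset_union_right hl)
                      (Finset.union_subset_union_right Finset.subset_union_right h)
              have hntC : NonTauto (c₁ ∪ insert (y, true) (proj x a)) :=
                nonTauto_mono hsubCA hCA
              have hntD : NonTauto (c₁ ∪ insert (y, false) (proj x b)) :=
                nonTauto_mono hsubDB hDB
              obtain ⟨e₁, he₁, hsub₁⟩ := hSC.2 hntC
              obtain ⟨e₂, he₂, hsub₂⟩ := hSD.2 hntD
              have hunion : (c₁ ∪ proj x a) ∪ (c₁ ∪ proj x b) =
                  c₁ ∪ (proj x a ∪ proj x b) :=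
                (Finset.union_union_distrib_left c₁ (proj x a) (proj x b)).symm
              obtain ⟨e, he, hesub⟩ := helperB he₁ he₂ (hsub₁.trans hsubCA)
                (hsub₂.trans hsubDB) (hGnt _ he₁) (hGnt _ he₂)
                (by rw [hunion]; exact hnt)
              rw [hunion] at hesub
              exact ⟨e, he, hesub⟩
        · -- Group Z : E is x-free
          have haT : (x, true) ∉ a := fun h => hET (Finset.mem_union_left _ h)
          have hbT : (x, true) ∉ b := fun h => hET (Finset.mem_union_right _ h)
          have haF : (x, false) ∉ a := fun h => hEF' (Finset.mem_union_left _ h)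
          have hbF : (x, false) ∉ b := fun h => hEF' (Finset.mem_union_right _ h)
          obtain ⟨hsC, e₁, he₁, hsub₁⟩ := ihC.2.2 (notMem_insert' (hneT true) haT)
            (notMem_insert' (hneT false) haF)
          obtain ⟨hsD, e₂, he₂, hsub₂⟩ := ihD.2.2 (notMem_insert' (hneF true) hbT)
            (notMem_insert' (hneF false) hbF)
          refine ⟨fun h' => absurd h' hET, fun h' => absurd h' hEF', fun _ _ => ?_⟩
          exact ⟨semres hsC hsD,
            helperB he₁ he₂ hsub₁ hsub₂ (hGnt _ he₁) (hGnt _ he₂) hEn⟩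

/-- if `c₁ ∪ {x}` is superredundant in the formula obtained from `F` by
splitting its clause `c₁ ∪ c₂` over the fresh variable `x`, then `c₁` is superredundant
in `F ∪ {c₁}`. -/
theorem split_part_superredundant
    (F : Finset Clause) (hF : IsCNF F) (c₁ c₂ : Clause)
    (h₁ : NonTauto c₁) (h₂ : NonTauto c₂)
    (hmem : c₁ ∪ c₂ ∈ F) (hnot : c₁ ∉ F) (x : ℕ) (hx : x ∉ varsF F)
    (hsr : SuperRedundant
      ((F.erase (c₁ ∪ c₂)) ∪ {insert (x, true) c₁, insert (x, false) c₂})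
      (insert (x, true) c₁)) :
    SuperRedundant (insert c₁ F) c₁ := by
  intro v hsatv
  have hv : ∀ e, ResCn (insert c₁ F) e → e ≠ c₁ → satClause v e := by
    intro e he hne
    exact hsatv e ⟨he, fun h => hne h⟩
  by_contra hnc
  have hxc₁ : ∀ bb : Bool, (x, bb) ∉ c₁ := fun bb h =>
    hx ⟨c₁ ∪ c₂, hmem, bb, Finset.mem_union_left _ h⟩
  set v' := Function.update v x false with hv'def
  have hsat' : satSet v'
      ({d | ResCn ((F.erase (c₁ ∪ c₂)) ∪ {insert (x, true) c₁, insert (x, false) c₂}) d}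
        \ {insert (x, true) c₁}) := by
    rintro d ⟨hd, hne⟩
    have hne' : d ≠ insert (x, true) c₁ := fun h => hne h
    have hinv := main_inv F hF c₁ c₂ h₁ hmem hnot x hx v hv hnc hd
    by_cases hdF : (x, false) ∈ d
    · exact ⟨(x, false), hdF, Function.update_self _ _ _⟩
    · by_cases hdT : (x, true) ∈ d
      · rcases hinv.1 hdT with h | ⟨hs, _⟩
        · exact absurd h hne'
        · obtain ⟨l, hl, hvl⟩ := hs
          obtain ⟨hld, hlx⟩ := mem_proj.1 hl
          exact ⟨l, hld, by rw [hv'def, Function.update_of_ne hlx]; exact hvl⟩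
      · obtain ⟨hs, _⟩ := hinv.2.2 hdT hdF
        obtain ⟨⟨n, bb⟩, hl, hvl⟩ := hs
        have hnx : n ≠ x := by
          rintro rfl
          cases bb
          · exact hdF hl
          · exact hdT hl
        exact ⟨(n, bb), hl, by rw [hv'def, Function.update_of_ne hnx]; exact hvl⟩
  obtain ⟨l, hl, hvl⟩ := hsr v' hsat'
  rcases Finset.mem_insert.1 hl with rfl | hl2
  · rw [hv'def, Function.update_self] at hvl
    exact Bool.noConfusion hvl
  · obtain ⟨n, bb⟩ := l
    have hnx : n ≠ x := by
      rintro rfl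
      exact hxc₁ bb hl2
    refine hnc ⟨(n, bb), hl2, ?_⟩
    rw [hv'def, Function.update_of_ne hnx] at hvl
    exact hvl
end

section
/- Let c and c₁ ∪ c₂ be two distinct clauses of the CNF formula F, and let x be a variable not occurring in F. If c is superredundant in (F \ {c₁ ∪ c₂}) ∪ {c₁ ∪ {x}, c₂ ∪ {¬x}}, then either c resolves with both c₁ and c₂ (that is, there is a literal of c whose complement is in c₁ yielding a non-tautological resolvent, and a literal of c whose complement is in c₂ yielding a non-tautological resolvent), or c is superredundant in F. -/
/-- `c` resolves with `d`: some literal of `c` has its complement in `d` and the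
corresponding resolvent is non-tautological. -/
def ResolvesWith (c d : Clause) : Prop :=
  ∃ l ∈ c, negLit l ∈ d ∧ NonTauto ((c.erase l) ∪ (d.erase (negLit l)))

-- ### auxiliary lemmas


lemma negLit_negLit (l : Lit) : negLit (negLit l) = l := by
  simp [negLit]

lemma negLit_ne (l : Lit) : negLit l ≠ l := by
  obtain ⟨n, b⟩ := l
  simp [negLit]

lemma negLit_inj {l m : Lit} (h : negLit l = negLit m) : l = m := by
  have := congrArg negLit h
  rwa [negLit_negLit, negLit_negLit] at this

lemma nontauto_subset {h h' : Clause} (hs : h ⊆ h') (hn : NonTauto h') : NonTauto h :=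
  fun l hl hnl => hn l (hs hl) (hs hnl)

lemma not_nontauto {h : Clause} (hn : ¬ NonTauto h) : ∃ l ∈ h, negLit l ∈ h := by
  simp only [NonTauto, not_forall] at hn
  obtain ⟨l, hl, hnl⟩ := hn
  exact ⟨l, hl, not_not.mp hnl⟩

lemma not_nontauto_of_subset {h h' : Clause} (hs : h ⊆ h') (hn : ¬ NonTauto h) :
    ¬ NonTauto h' := fun H => hn (nontauto_subset hs H)

lemma sat_subset {v : ℕ → Bool} {h h' : Clause} (hs : h ⊆ h') (hv : satClause v h) :
    satClause v h' := by
  obtain ⟨l, hl, hvl⟩ := hv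
  exact ⟨l, hs hl, hvl⟩

lemma bool_ne_eq {a b : Bool} (h : a ≠ b) : a = !b := by
  revert h; revert a b; decide

lemma unsat_negLit {v : ℕ → Bool} {l : Lit} (h : ¬ v l.1 = l.2) :
    v (negLit l).1 = (negLit l).2 := by
  simp only [negLit]
  exact bool_ne_eq h

lemma unsat_nontauto {v : ℕ → Bool} {h : Clause} (hu : ∀ l ∈ h, ¬ v l.1 = l.2) :
    NonTauto h := by
  intro l hl hnl
  have h1 := hu l hl
  have h2 := hu _ hnl
  exact h2 (unsat_negLit h1)

lemma rescn_nontauto {G : Finset Clause} (hG : IsCNF G) {E : Clause}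
    (hE : ResCn G E) : NonTauto E := by
  induction hE with
  | base h => exact hG _ h
  | step _ _ r _ _ =>
    obtain ⟨y, a, b, _, _, _, _, hEn, _, _, rfl⟩ := r
    exact hEn

lemma resolvent_mk {C D : Clause} {y : ℕ}
    (hCy : (y, true) ∈ C) (hDy : (y, false) ∈ D)
    (hC : NonTauto C) (hD : NonTauto D)
    (hE : NonTauto (C.erase (y, true) ∪ D.erase (y, false))) :
    Resolvent C D (C.erase (y, true) ∪ D.erase (y, false)) :=
  ⟨y, C.erase (y, true), D.erase (y, false),
    Finset.notMem_erase _ _, Finset.notMem_erase _ _,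
    by rwa [Finset.insert_erase hCy], by rwa [Finset.insert_erase hDy], hE,
    (Finset.insert_erase hCy).symm, (Finset.insert_erase hDy).symm, rfl⟩

lemma rescn_resolve {G : Finset Clause} {C D : Clause} (hC : ResCn G C) (hD : ResCn G D)
    (hCn : NonTauto C) (hDn : NonTauto D) {l : Lit} (hl : l ∈ C) (hnl : negLit l ∈ D)
    (hE : NonTauto (C.erase l ∪ D.erase (negLit l))) :
    ResCn G (C.erase l ∪ D.erase (negLit l)) := by
  obtain ⟨y, b⟩ := l
  cases b with
  | true =>
    have hneg : negLit (y, true) = (y, false) := rfl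
    rw [hneg] at hnl hE ⊢
    exact ResCn.step hC hD (resolvent_mk hl hnl hCn hDn hE)
  | false =>
    have hneg : negLit (y, false) = (y, true) := rfl
    rw [hneg] at hnl hE ⊢
    rw [Finset.union_comm]
    exact ResCn.step hD hC
      (resolvent_mk hnl hl hDn hCn (by rwa [Finset.union_comm]))

lemma lit_eq_of_var_eq {q l : Lit} (h : q.1 = l.1) : q = l ∨ q = negLit l := by
  obtain ⟨n, b⟩ := q
  obtain ⟨m, b'⟩ := l
  simp only at h
  subst h
  rcases Bool.eq_or_eq_not b b' with h | h
  · left; rw [h]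
  · right; rw [h]; rfl

def SubC (F : Finset Clause) (h : Clause) : Prop :=
  ¬ NonTauto h ∨ ∃ g, ResCn F g ∧ g ⊆ h

lemma subC_mono {F : Finset Clause} {h h' : Clause} (hs : h ⊆ h') (hh : SubC F h) :
    SubC F h' := by
  rcases hh with hT | ⟨g, hg, hgs⟩
  · exact Or.inl (not_nontauto_of_subset hs hT)
  · exact Or.inr ⟨g, hg, hgs.trans hs⟩

lemma fresh_not_mem {F : Finset Clause} {x : ℕ} (hx : x ∉ varsF F) {E : Clause}
    (hE : E ∈ F) (b : Bool) : (x, b) ∉ E := fun h => hx ⟨E, hE, b, h⟩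

lemma subP
    (F : Finset Clause) (hF : IsCNF F) (x : ℕ) (hx : x ∉ varsF F)
    (s : Bool) (d₁ d₂ : Clause) (hmem : d₁ ∪ d₂ ∈ F)
    (K : Clause) (hK : SubC F (d₁ ∪ K)) :
    ∀ E : Clause,
      ResCn (F.erase (d₁ ∪ d₂) ∪ {insert (x, s) d₁, insert (x, !s) d₂}) E →
      (x, !s) ∉ E → SubC F (E.erase (x, s) ∪ K) := by
  have hxd₁ : ∀ b, (x, b) ∉ d₁ :=
    fun b hb => fresh_not_mem hx hmem b (Finset.mem_union_left _ hb)
  intro E hE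
  induction hE with
  | @base E h =>
    intro hxE
    rcases Finset.mem_union.mp h with h | h
    · have hEF := Finset.mem_of_mem_erase h
      rw [Finset.erase_eq_of_notMem (fresh_not_mem hx hEF s)]
      exact Or.inr ⟨E, ResCn.base hEF, Finset.subset_union_left⟩
    · rcases Finset.mem_insert.mp h with rfl | h
      · rw [Finset.erase_insert (hxd₁ s)]
        exact hK
      · rw [Finset.mem_singleton] at h
        subst h
        exact absurd (Finset.mem_insert_self _ _) hxE
  | @step C D Ecl hC hD r ihC ihD =>
    obtain ⟨y, a, b, hya, hyb, hCn, hDn, hEn, rfl, rfl, rfl⟩ := r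
    intro hxE
    have hxa : (x, !s) ∉ a := fun h => hxE (Finset.mem_union_left _ h)
    have hxb : (x, !s) ∉ b := fun h => hxE (Finset.mem_union_right _ h)
    by_cases hyx : y = x
    · subst hyx
      cases s with
      | true =>
        have hxC : ((y : ℕ), !true) ∉ insert ((y : ℕ), true) a := by
          intro h
          rcases Finset.mem_insert.mp h with h | h
          · exact absurd h (by simp)
          · exact hxa h
        have hS := ihC hxC
        rw [Finset.erase_insert hya] at hS
        refine subC_mono ?_ hS
        intro l hl
        rcases Finset.mem_union.mp hl with hl | hl
        · exact Finset.mem_union_left _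
            (Finset.mem_erase.mpr ⟨fun h => hya (h ▸ hl), Finset.mem_union_left _ hl⟩)
        · exact Finset.mem_union_right _ hl
      | false =>
        have hxD : ((y : ℕ), !false) ∉ insert ((y : ℕ), false) b := by
          intro h
          rcases Finset.mem_insert.mp h with h | h
          · exact absurd h (by simp)
          · exact hxb h
        have hS := ihD hxD
        rw [Finset.erase_insert hyb] at hS
        refine subC_mono ?_ hS
        intro l hl
        rcases Finset.mem_union.mp hl with hl | hl
        · exact Finset.mem_union_left _
            (Finset.mem_erase.mpr ⟨fun h => hyb (h ▸ hl), Finset.mem_union_right _ hl⟩)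
        · exact Finset.mem_union_right _ hl
    · have hne1 : ((y, true) : Lit) ≠ (x, s) := fun h => hyx (congrArg Prod.fst h)
      have hne2 : ((y, false) : Lit) ≠ (x, s) := fun h => hyx (congrArg Prod.fst h)
      have hxC : ((x : ℕ), !s) ∉ insert ((y : ℕ), true) a := by
        intro h
        rcases Finset.mem_insert.mp h with h | h
        · exact hyx (congrArg Prod.fst h).symm
        · exact hxa h
      have hxD : ((x : ℕ), !s) ∉ insert ((y : ℕ), false) b := by
        intro h
        rcases Finset.mem_insert.mp h with h | h
        · exact hyx (congrArg Prod.fst h).symm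
        · exact hxb h
      have SC := ihC hxC
      have SD := ihD hxD
      rw [Finset.erase_insert_of_ne hne1] at SC
      rw [Finset.erase_insert_of_ne hne2] at SD
      rw [Finset.erase_union_distrib]
      set A := a.erase (x, s) with hA
      set B := b.erase (x, s) with hB
      have hyA : ((y : ℕ), false) ∉ A := by
        intro h
        exact hCn (y, true) (Finset.mem_insert_self _ _)
          (Finset.mem_insert_of_mem (Finset.mem_of_mem_erase h))
      have hyB : ((y : ℕ), true) ∉ B := by
        intro h
        exact hDn (y, false) (Finset.mem_insert_self _ _)
          (Finset.mem_insert_of_mem (Finset.mem_of_mem_erase h))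
      have hsubAK : A ∪ K ⊆ A ∪ B ∪ K := by
        intro l hl
        rcases Finset.mem_union.mp hl with hl | hl
        · exact Finset.mem_union_left _ (Finset.mem_union_left _ hl)
        · exact Finset.mem_union_right _ hl
      have hsubBK : B ∪ K ⊆ A ∪ B ∪ K := by
        intro l hl
        rcases Finset.mem_union.mp hl with hl | hl
        · exact Finset.mem_union_left _ (Finset.mem_union_right _ hl)
        · exact Finset.mem_union_right _ hl
      have memsplitC : ∀ r : Lit, r ∈ insert ((y : ℕ), true) A ∪ K →
          r = (y, true) ∨ r ∈ A ∪ K := by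
        intro r hr
        rcases Finset.mem_union.mp hr with hr | hr
        · rcases Finset.mem_insert.mp hr with h | h
          · exact Or.inl h
          · exact Or.inr (Finset.mem_union_left _ h)
        · exact Or.inr (Finset.mem_union_right _ hr)
      have memsplitD : ∀ r : Lit, r ∈ insert ((y : ℕ), false) B ∪ K →
          r = (y, false) ∨ r ∈ B ∪ K := by
        intro r hr
        rcases Finset.mem_union.mp hr with hr | hr
        · rcases Finset.mem_insert.mp hr with h | h
          · exact Or.inl h
          · exact Or.inr (Finset.mem_union_left _ h)
        · exact Or.inr (Finset.mem_union_right _ hr)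
      -- helper: if (y,false) ∈ K then done via SD
      have doneK : ((y : ℕ), false) ∈ K → SubC F (A ∪ B ∪ K) := by
        intro hyK
        refine subC_mono hsubBK ?_
        rwa [Finset.insert_union,
          Finset.insert_eq_self.mpr (Finset.mem_union_right _ hyK)] at SD
      rcases SC with hT | ⟨g₁, hg₁, hg₁s⟩
      · obtain ⟨q, hq, hnq⟩ := not_nontauto hT
        rcases memsplitC q hq with rfl | hqAK
        · have hnq' : ((y : ℕ), false) ∈ insert ((y : ℕ), true) A ∪ K := hnq
          rcases memsplitC _ hnq' with h | h
          · exact absurd h (by simp)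
          · rcases Finset.mem_union.mp h with h | h
            · exact absurd h hyA
            · exact doneK h
        · by_cases hq2 : negLit q = (y, true)
          · have hqv : q = ((y : ℕ), false) := by
              rw [← negLit_negLit q, hq2]; rfl
            rw [hqv] at hqAK
            rcases Finset.mem_union.mp hqAK with h | h
            · exact absurd h hyA
            · exact doneK h
          · rcases memsplitC _ hnq with h | hnqAK
            · exact absurd h hq2
            · exact Or.inl (fun HN => HN q (hsubAK hqAK) (hsubAK hnqAK))
      · by_cases hgy : ((y : ℕ), true) ∈ g₁
        · rcases SD with hT | ⟨g₂, hg₂, hg₂s⟩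
          · obtain ⟨q, hq, hnq⟩ := not_nontauto hT
            have doneK' : ((y : ℕ), true) ∈ K → SubC F (A ∪ B ∪ K) := by
              intro hyK
              refine Or.inr ⟨g₁, hg₁, ?_⟩
              intro l hl
              rcases memsplitC l (hg₁s hl) with rfl | h
              · exact Finset.mem_union_right _ hyK
              · exact hsubAK h
            rcases memsplitD q hq with rfl | hqBK
            · have hnq' : ((y : ℕ), true) ∈ insert ((y : ℕ), false) B ∪ K := hnq
              rcases memsplitD _ hnq' with h | h
              · exact absurd h (by simp)
              · rcases Finset.mem_union.mp h with h | h
                · exact absurd h hyB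
                · exact doneK' h
            · by_cases hq2 : negLit q = (y, false)
              · have hqv : q = ((y : ℕ), true) := by
                  rw [← negLit_negLit q, hq2]; rfl
                rw [hqv] at hqBK
                rcases Finset.mem_union.mp hqBK with h | h
                · exact absurd h hyB
                · exact doneK' h
              · rcases memsplitD _ hnq with h | hnqBK
                · exact absurd h hq2
                · exact Or.inl (fun HN => HN q (hsubBK hqBK) (hsubBK hnqBK))
          · by_cases hgy2 : ((y : ℕ), false) ∈ g₂
            · have hrsub : g₁.erase (y, true) ∪ g₂.erase (y, false) ⊆ A ∪ B ∪ K := by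
                intro l hl
                rcases Finset.mem_union.mp hl with hl | hl
                · have hlne := (Finset.mem_erase.mp hl).1
                  rcases memsplitC l (hg₁s (Finset.mem_of_mem_erase hl)) with h | h
                  · exact absurd h hlne
                  · exact hsubAK h
                · have hlne := (Finset.mem_erase.mp hl).1
                  rcases memsplitD l (hg₂s (Finset.mem_of_mem_erase hl)) with h | h
                  · exact absurd h hlne
                  · exact hsubBK h
              by_cases hrn : NonTauto (g₁.erase (y, true) ∪ g₂.erase (y, false))
              · refine Or.inr ⟨_, ?_, hrsub⟩
                have := rescn_resolve hg₁ hg₂ (rescn_nontauto hF hg₁)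
                  (rescn_nontauto hF hg₂) (l := (y, true)) hgy
                  (by rw [show negLit ((y : ℕ), true) = (y, false) from rfl]; exact hgy2)
                  (by rw [show negLit ((y : ℕ), true) = (y, false) from rfl]; exact hrn)
                rwa [show negLit ((y : ℕ), true) = (y, false) from rfl] at this
              · exact Or.inl (fun HN => hrn (nontauto_subset hrsub HN))
            · refine Or.inr ⟨g₂, hg₂, ?_⟩
              intro l hl
              rcases memsplitD l (hg₂s hl) with rfl | h
              · exact absurd hl hgy2
              · exact hsubBK h
        · refine Or.inr ⟨g₁, hg₁, ?_⟩
          intro l hl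
          rcases memsplitC l (hg₁s hl) with rfl | h
          · exact absurd hl hgy
          · exact hsubAK h

lemma cruxLem
    (F : Finset Clause) (hF : IsCNF F) (x : ℕ) (hx : x ∉ varsF F)
    (s : Bool) (d₁ d₂ : Clause) (hmem : d₁ ∪ d₂ ∈ F)
    (c : Clause) (hc : c ∈ F)
    (v : ℕ → Bool)
    (hvS : ∀ g, ResCn F g → g ≠ c → satClause v g)
    (hvc : ¬ satClause v c)
    (hd₁ : satClause v d₁)
    (halt : ¬ satClause v d₂ ∨ ¬ ResolvesWith c d₁)
    (hF' : IsCNF (F.erase (d₁ ∪ d₂) ∪ {insert (x, s) d₁, insert (x, !s) d₂}))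
    (l₀ : Lit) (hl₀ : l₀ ∈ c)
    (P : Clause)
    (hP : ResCn (F.erase (d₁ ∪ d₂) ∪ {insert (x, s) d₁, insert (x, !s) d₂}) P)
    (hxP : (x, !s) ∉ P)
    (hpP : negLit l₀ ∈ P.erase (x, s))
    (huniq : ∀ q ∈ P.erase (x, s), v q.1 = q.2 → q = negLit l₀) :
    False := by
  have hPn : NonTauto P := rescn_nontauto hF' hP
  have hPdn : NonTauto (P.erase (x, s)) :=
    nontauto_subset (Finset.erase_subset _ _) hPn
  have hcu : ∀ l ∈ c, ¬ v l.1 = l.2 := fun l hl hsat => hvc ⟨l, hl, hsat⟩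
  have hl₀P : l₀ ∉ P.erase (x, s) := fun h => hPdn l₀ h hpP
  have hcn : NonTauto c := hF c hc
  have hd₁n : NonTauto d₁ := nontauto_subset Finset.subset_union_left (hF _ hmem)
  have hd₂n : NonTauto d₂ := nontauto_subset Finset.subset_union_right (hF _ hmem)
  have hd₁₂n : NonTauto (d₁ ∪ d₂) := hF _ hmem
  -- Step 1: every satisfied literal of d₁ equals negLit l₀
  have CR1 : ∀ m ∈ d₁, v m.1 = m.2 → m = negLit l₀ := by
    intro m hm hms
    have hKsub : SubC F (d₁ ∪ {negLit m}) :=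
      Or.inl (fun HN => HN m (Finset.mem_union_left _ hm)
        (Finset.mem_union_right _ (Finset.mem_singleton_self _)))
    have hS := subP F hF x hx s d₁ d₂ hmem {negLit m} hKsub P hP hxP
    have hmem' : ∀ r : Lit, r ∈ P.erase (x, s) ∪ {negLit m} →
        r ∈ P.erase (x, s) ∨ r = negLit m := by
      intro r hr
      rcases Finset.mem_union.mp hr with hr | hr
      · exact Or.inl hr
      · exact Or.inr (Finset.mem_singleton.mp hr)
    rcases hS with hT | ⟨g, hg, hgs⟩
    · obtain ⟨q, hq, hnq⟩ := not_nontauto hT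
      rcases hmem' q hq with hqP | hqm
      · rcases hmem' _ hnq with hnqP | hnqm
        · exact absurd hnqP (hPdn q hqP)
        · have hqm : q = m := negLit_inj hnqm
          subst hqm
          exact huniq q hqP hms
      · rcases hmem' _ hnq with hnqP | hnqm
        · have hmP : m ∈ P.erase (x, s) := by
            rw [hqm, negLit_negLit] at hnqP
            exact hnqP
          exact huniq m hmP hms
        · exact absurd (hnqm.trans hqm.symm) (negLit_ne q)
    · by_cases hgc : g = c
      · subst hgc
        rcases hmem' l₀ (hgs hl₀) with h | h
        · exact absurd h hl₀P
        · rw [h, negLit_negLit]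
      · obtain ⟨q, hq, hqs⟩ := hvS g hg hgc
        rcases hmem' q (hgs hq) with hqP | hqm
        · have hqp : q = negLit l₀ := huniq q hqP hqs
          have hpg : negLit l₀ ∈ g := hqp ▸ hq
          have hguns : ∀ l ∈ g.erase (negLit l₀), ¬ v l.1 = l.2 := by
            intro l hl hls
            rcases hmem' l (hgs (Finset.mem_of_mem_erase hl)) with h | h
            · exact (Finset.mem_erase.mp hl).1 (huniq l h hls)
            · rw [h] at hls
              have hls' : v m.1 = !m.2 := hls
              exact absurd (hms.symm.trans hls') (by simp)
          have hrnt : NonTauto (c.erase l₀ ∪ g.erase (negLit l₀)) := by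
            apply unsat_nontauto
            intro l hl
            rcases Finset.mem_union.mp hl with hl | hl
            · exact hcu l (Finset.mem_of_mem_erase hl)
            · exact hguns l hl
          have hr : ResCn F (c.erase l₀ ∪ g.erase (negLit l₀)) :=
            rescn_resolve (ResCn.base hc) hg hcn (rescn_nontauto hF hg) hl₀ hpg hrnt
          by_cases hrc : (c.erase l₀ ∪ g.erase (negLit l₀)) = c
          · have hl₀r : l₀ ∈ c.erase l₀ ∪ g.erase (negLit l₀) := hrc.symm ▸ hl₀
            rcases Finset.mem_union.mp hl₀r with h | h
            · exact absurd h (Finset.notMem_erase _ _)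
            · rcases hmem' l₀ (hgs (Finset.mem_of_mem_erase h)) with h' | h'
              · exact absurd h' hl₀P
              · rw [h', negLit_negLit]
          · obtain ⟨l, hl, hls⟩ := hvS _ hr hrc
            rcases Finset.mem_union.mp hl with h | h
            · exact absurd hls (hcu l (Finset.mem_of_mem_erase h))
            · exact absurd hls (hguns l h)
        · rw [hqm] at hqs
          have hqs' : v m.1 = !m.2 := hqs
          exact absurd (hms.symm.trans hqs') (by simp)
  obtain ⟨m₀, hm₀, hm₀s⟩ := hd₁
  have hp₁ : negLit l₀ ∈ d₁ := by
    rw [← CR1 m₀ hm₀ hm₀s]; exact hm₀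
  rcases halt with hd₂u | hnr
  · -- case : v does not satisfy d₂; flip the variable of l₀
    set u : ℕ → Bool := fun n => if n = l₀.1 then !(v l₀.1) else v n with hu
    have hul₀ : u l₀.1 = l₀.2 := by
      have h1 : v l₀.1 = !l₀.2 := bool_ne_eq (hcu l₀ hl₀)
      simp only [hu, if_pos rfl, h1, Bool.not_not]
    have hup : ¬ u (negLit l₀).1 = (negLit l₀).2 := by
      intro h
      have h1 : u l₀.1 = !l₀.2 := h
      rw [hul₀] at h1
      exact absurd h1 (by simp)
    have huvar : ∀ q : Lit, q.1 ≠ l₀.1 → u q.1 = v q.1 := by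
      intro q hq
      simp only [hu, if_neg hq]
    have huS : ∀ g, ResCn F g → g ≠ c → satClause u g := by
      intro g hg hgc
      by_cases hex : ∃ q ∈ g, v q.1 = q.2 ∧ q.1 ≠ l₀.1
      · obtain ⟨q, hq, hqs, hqv⟩ := hex
        exact ⟨q, hq, (huvar q hqv).trans hqs⟩
      · push_neg at hex
        obtain ⟨q₀, hq₀, hq₀s⟩ := hvS g hg hgc
        rcases lit_eq_of_var_eq (hex q₀ hq₀ hq₀s) with h | hq₀p
        · rw [h] at hq₀s
          exact absurd hq₀s (hcu _ hl₀)
        · have hpg : negLit l₀ ∈ g := hq₀p ▸ hq₀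
          have hguns : ∀ l ∈ g.erase (negLit l₀), ¬ v l.1 = l.2 := by
            intro l hl hls
            rcases lit_eq_of_var_eq (hex l (Finset.mem_of_mem_erase hl) hls) with h | h
            · rw [h] at hls
              exact hcu _ hl₀ hls
            · exact (Finset.mem_erase.mp hl).1 h
          have hrnt : NonTauto (c.erase l₀ ∪ g.erase (negLit l₀)) := by
            apply unsat_nontauto
            intro l hl
            rcases Finset.mem_union.mp hl with hl | hl
            · exact hcu l (Finset.mem_of_mem_erase hl)
            · exact hguns l hl
          have hr : ResCn F (c.erase l₀ ∪ g.erase (negLit l₀)) :=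
            rescn_resolve (ResCn.base hc) hg hcn (rescn_nontauto hF hg) hl₀ hpg hrnt
          by_cases hrc : (c.erase l₀ ∪ g.erase (negLit l₀)) = c
          · have hl₀r : l₀ ∈ c.erase l₀ ∪ g.erase (negLit l₀) := hrc.symm ▸ hl₀
            rcases Finset.mem_union.mp hl₀r with h | h
            · exact absurd h (Finset.notMem_erase _ _)
            · exact ⟨l₀, Finset.mem_of_mem_erase h, hul₀⟩
          · obtain ⟨l, hl, hls⟩ := hvS _ hr hrc
            rcases Finset.mem_union.mp hl with h | h
            · exact absurd hls (hcu l (Finset.mem_of_mem_erase h))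
            · exact absurd hls (hguns l h)
    have hS := subP F hF x hx s d₁ d₂ hmem d₂
      (Or.inr ⟨d₁ ∪ d₂, ResCn.base hmem, subset_rfl⟩) P hP hxP
    rcases hS with hT | ⟨g, hg, hgs⟩
    · obtain ⟨q, hq, hnq⟩ := not_nontauto hT
      rcases Finset.mem_union.mp hq with hqP | hqd
      · rcases Finset.mem_union.mp hnq with hnqP | hnqd
        · exact hPdn q hqP hnqP
        · by_cases hqs : v q.1 = q.2
          · have hqp := huniq q hqP hqs
            rw [hqp, negLit_negLit] at hnqd
            exact hd₁₂n (negLit l₀) (Finset.mem_union_left _ hp₁)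
              (by rw [negLit_negLit]; exact Finset.mem_union_right _ hnqd)
          · exact hd₂u ⟨negLit q, hnqd, unsat_negLit hqs⟩
      · rcases Finset.mem_union.mp hnq with hnqP | hnqd
        · by_cases hqs : v q.1 = q.2
          · exact hd₂u ⟨q, hqd, hqs⟩
          · have hqp := huniq _ hnqP (unsat_negLit hqs)
            have hqL : q = l₀ := by
              rw [← negLit_negLit q, hqp, negLit_negLit]
            rw [hqL] at hqd
            exact hd₁₂n (negLit l₀) (Finset.mem_union_left _ hp₁)
              (by rw [negLit_negLit]; exact Finset.mem_union_right _ hqd)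
        · exact hd₂n q hqd hnqd
    · by_cases hgc : g = c
      · subst hgc
        rcases Finset.mem_union.mp (hgs hl₀) with h | h
        · exact hl₀P h
        · exact hd₁₂n (negLit l₀) (Finset.mem_union_left _ hp₁)
            (by rw [negLit_negLit]; exact Finset.mem_union_right _ h)
      · obtain ⟨q, hq, hqu⟩ := huS g hg hgc
        rcases Finset.mem_union.mp (hgs hq) with hqP | hqd
        · by_cases hqv : q.1 = l₀.1
          · rcases lit_eq_of_var_eq hqv with h | hqp
            · rw [h] at hqP
              exact hl₀P hqP
            · rw [hqp] at hqu
              exact hup hqu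
          · have hqs : v q.1 = q.2 := ((huvar q hqv).symm).trans hqu
            have := huniq q hqP hqs
            exact hqv (by rw [this]; rfl)
        · by_cases hqv : q.1 = l₀.1
          · rcases lit_eq_of_var_eq hqv with h | hqp
            · rw [h] at hqd
              exact hd₁₂n (negLit l₀) (Finset.mem_union_left _ hp₁)
                (by rw [negLit_negLit]; exact Finset.mem_union_right _ hqd)
            · rw [hqp] at hqu
              exact hup hqu
          · have hqs : v q.1 = q.2 := ((huvar q hqv).symm).trans hqu
            exact hd₂u ⟨q, hqd, hqs⟩
  · -- case : c does not resolve with d₁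
    have hclash : ¬ NonTauto (c.erase l₀ ∪ d₁.erase (negLit l₀)) := by
      intro hnt'
      exact hnr ⟨l₀, hl₀, hp₁, hnt'⟩
    obtain ⟨q, hq, hnq⟩ := not_nontauto hclash
    rcases Finset.mem_union.mp hq with hqc | hqd
    · rcases Finset.mem_union.mp hnq with hnqc | hnqd
      · exact hcn q (Finset.mem_of_mem_erase hqc) (Finset.mem_of_mem_erase hnqc)
      · have hqu : ¬ v q.1 = q.2 := hcu q (Finset.mem_of_mem_erase hqc)
        exact (Finset.mem_erase.mp hnqd).1
          (CR1 (negLit q) (Finset.mem_of_mem_erase hnqd) (unsat_negLit hqu))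
    · rcases Finset.mem_union.mp hnq with hnqc | hnqd
      · have hnqu : ¬ v (negLit q).1 = (negLit q).2 := hcu _ (Finset.mem_of_mem_erase hnqc)
        have hsat : v q.1 = q.2 := by
          by_contra h
          exact hnqu (unsat_negLit h)
        exact (Finset.mem_erase.mp hqd).1 (CR1 q (Finset.mem_of_mem_erase hqd) hsat)
      · exact hd₁n q (Finset.mem_of_mem_erase hqd) (Finset.mem_of_mem_erase hnqd)

lemma mainLem
    (F : Finset Clause) (hF : IsCNF F) (x : ℕ) (hx : x ∉ varsF F)
    (s : Bool) (d₁ d₂ : Clause) (hmem : d₁ ∪ d₂ ∈ F)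
    (c : Clause) (hc : c ∈ F)
    (v : ℕ → Bool)
    (hvS : ∀ g, ResCn F g → g ≠ c → satClause v g)
    (hvc : ¬ satClause v c)
    (hd₁ : satClause v d₁)
    (halt : ¬ satClause v d₂ ∨ ¬ ResolvesWith c d₁)
    (hF' : IsCNF (F.erase (d₁ ∪ d₂) ∪ {insert (x, s) d₁, insert (x, !s) d₂})) :
    ∀ E : Clause,
      ResCn (F.erase (d₁ ∪ d₂) ∪ {insert (x, s) d₁, insert (x, !s) d₂}) E →
      (x, !s) ∉ E → E = c ∨ satClause v (E.erase (x, s)) := by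
  have hxd₁ : ∀ bb, (x, bb) ∉ d₁ :=
    fun bb hb => fresh_not_mem hx hmem bb (Finset.mem_union_left _ hb)
  have hxc : ∀ bb, (x, bb) ∉ c := fresh_not_mem hx hc
  have hcn : NonTauto c := hF c hc
  intro E hE
  induction hE with
  | @base E h =>
    intro hxE
    rcases Finset.mem_union.mp h with h | h
    · have hEF := Finset.mem_of_mem_erase h
      by_cases hEc : E = c
      · exact Or.inl hEc
      · refine Or.inr ?_
        obtain ⟨q, hq, hqs⟩ := hvS E (ResCn.base hEF) hEc
        exact ⟨q, Finset.mem_erase.mpr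
          ⟨fun hh => fresh_not_mem hx hEF s (hh ▸ hq), hq⟩, hqs⟩
    · rcases Finset.mem_insert.mp h with rfl | h
      · refine Or.inr ?_
        rw [Finset.erase_insert (hxd₁ s)]
        exact hd₁
      · rw [Finset.mem_singleton] at h
        subst h
        exact absurd (Finset.mem_insert_self _ _) hxE
  | @step C D Ecl hC hD r ihC ihD =>
    obtain ⟨y, a, b, hya, hyb, hCn, hDn, hEn, rfl, rfl, rfl⟩ := r
    intro hxE
    have hxa : (x, !s) ∉ a := fun h => hxE (Finset.mem_union_left _ h)
    have hxb : (x, !s) ∉ b := fun h => hxE (Finset.mem_union_right _ h)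
    by_cases hyx : y = x
    · subst hyx
      cases s with
      | true =>
        have hxC : ((y : ℕ), !true) ∉ insert ((y : ℕ), true) a := by
          intro h
          rcases Finset.mem_insert.mp h with h | h
          · exact absurd h (by simp)
          · exact hxa h
        rcases ihC hxC with hCc | hCs
        · exact absurd (hCc ▸ Finset.mem_insert_self ((y : ℕ), true) a) (hxc true)
        · rw [Finset.erase_insert hya] at hCs
          refine Or.inr (sat_subset ?_ hCs)
          intro l hl
          exact Finset.mem_erase.mpr ⟨fun h => hya (h ▸ hl), Finset.mem_union_left _ hl⟩
      | false =>
        have hxD : ((y : ℕ), !false) ∉ insert ((y : ℕ), false) b := by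
          intro h
          rcases Finset.mem_insert.mp h with h | h
          · exact absurd h (by simp)
          · exact hxb h
        rcases ihD hxD with hDc | hDs
        · exact absurd (hDc ▸ Finset.mem_insert_self ((y : ℕ), false) b) (hxc false)
        · rw [Finset.erase_insert hyb] at hDs
          refine Or.inr (sat_subset ?_ hDs)
          intro l hl
          exact Finset.mem_erase.mpr ⟨fun h => hyb (h ▸ hl), Finset.mem_union_right _ hl⟩
    · have hne1 : ((y, true) : Lit) ≠ (x, s) := fun h => hyx (congrArg Prod.fst h)
      have hne2 : ((y, false) : Lit) ≠ (x, s) := fun h => hyx (congrArg Prod.fst h)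
      have hxC : ((x : ℕ), !s) ∉ insert ((y : ℕ), true) a := by
        intro h
        rcases Finset.mem_insert.mp h with h | h
        · exact hyx (congrArg Prod.fst h).symm
        · exact hxa h
      have hxD : ((x : ℕ), !s) ∉ insert ((y : ℕ), false) b := by
        intro h
        rcases Finset.mem_insert.mp h with h | h
        · exact hyx (congrArg Prod.fst h).symm
        · exact hxb h
      have eqC : (insert ((y : ℕ), true) a).erase (x, s)
          = insert ((y : ℕ), true) (a.erase (x, s)) := Finset.erase_insert_of_ne hne1
      have eqD : (insert ((y : ℕ), false) b).erase (x, s)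
          = insert ((y : ℕ), false) (b.erase (x, s)) := Finset.erase_insert_of_ne hne2
      have hsubA : a.erase (x, s) ⊆ (a ∪ b).erase (x, s) := by
        intro l hl
        exact Finset.mem_erase.mpr ⟨(Finset.mem_erase.mp hl).1,
          Finset.mem_union_left _ (Finset.mem_of_mem_erase hl)⟩
      have hsubB : b.erase (x, s) ⊆ (a ∪ b).erase (x, s) := by
        intro l hl
        exact Finset.mem_erase.mpr ⟨(Finset.mem_erase.mp hl).1,
          Finset.mem_union_right _ (Finset.mem_of_mem_erase hl)⟩
      rcases ihC hxC with hCc | hCs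
      · rcases ihD hxD with hDc | hDs
        · -- both parents equal c : c would be tautological
          have h1 : ((y : ℕ), true) ∈ c := hCc ▸ Finset.mem_insert_self _ _
          have h2 : ((y : ℕ), false) ∈ c := hDc ▸ Finset.mem_insert_self _ _
          exact absurd h2 (hcn ((y : ℕ), true) h1)
        · -- C = c ; D satisfied : either via a non-pivot literal, or crux
          rw [eqD] at hDs
          by_cases hex : ∃ q ∈ insert ((y : ℕ), false) (b.erase (x, s)),
              v q.1 = q.2 ∧ q ≠ ((y : ℕ), false)
          · obtain ⟨q, hq, hqs, hqne⟩ := hex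
            have hqb : q ∈ b.erase (x, s) := by
              rcases Finset.mem_insert.mp hq with h | h
              · exact absurd h hqne
              · exact h
            exact Or.inr ⟨q, hsubB hqb, hqs⟩
          · exfalso
            push_neg at hex
            have hl₀ : ((y : ℕ), true) ∈ c := hCc ▸ Finset.mem_insert_self _ _
            refine cruxLem F hF x hx s d₁ d₂ hmem c hc v hvS hvc hd₁ halt hF'
              ((y : ℕ), true) hl₀ (insert ((y : ℕ), false) b) hD hxD ?_ ?_
            · rw [eqD]
              exact Finset.mem_insert_self _ _
            · intro q hq hqs
              rw [eqD] at hq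
              exact hex q hq hqs
      · rcases ihD hxD with hDc | hDs
        · -- D = c ; C satisfied
          rw [eqC] at hCs
          by_cases hex : ∃ q ∈ insert ((y : ℕ), true) (a.erase (x, s)),
              v q.1 = q.2 ∧ q ≠ ((y : ℕ), true)
          · obtain ⟨q, hq, hqs, hqne⟩ := hex
            have hqa : q ∈ a.erase (x, s) := by
              rcases Finset.mem_insert.mp hq with h | h
              · exact absurd h hqne
              · exact h
            exact Or.inr ⟨q, hsubA hqa, hqs⟩
          · exfalso
            push_neg at hex
            have hl₀ : ((y : ℕ), false) ∈ c := hDc ▸ Finset.mem_insert_self _ _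
            refine cruxLem F hF x hx s d₁ d₂ hmem c hc v hvS hvc hd₁ halt hF'
              ((y : ℕ), false) hl₀ (insert ((y : ℕ), true) a) hC hxC ?_ ?_
            · rw [eqC]
              exact Finset.mem_insert_self _ _
            · intro q hq hqs
              rw [eqC] at hq
              exact hex q hq hqs
        · -- both satisfied
          rw [eqC] at hCs
          rw [eqD] at hDs
          obtain ⟨q₁, hq₁, hqs₁⟩ := hCs
          obtain ⟨q₂, hq₂, hqs₂⟩ := hDs
          rcases Finset.mem_insert.mp hq₁ with h1 | h1
          · rcases Finset.mem_insert.mp hq₂ with h2 | h2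
            · rw [h1] at hqs₁
              rw [h2] at hqs₂
              have hT : (true : Bool) = false := hqs₁.symm.trans hqs₂
              exact absurd hT (by decide)
            · exact Or.inr ⟨q₂, hsubB h2, hqs₂⟩
          · exact Or.inr ⟨q₁, hsubA h1, hqs₁⟩

lemma nontauto_insert_fresh {x : ℕ} {d : Clause} (hd : NonTauto d)
    (hxd : ∀ b, (x, b) ∉ d) (bb : Bool) : NonTauto (insert (x, bb) d) := by
  intro l hl hnl
  rcases Finset.mem_insert.mp hl with rfl | hl
  · rcases Finset.mem_insert.mp hnl with h | h
    · have := congrArg Prod.snd h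
      simp [negLit] at this
    · exact hxd _ h
  · rcases Finset.mem_insert.mp hnl with h | h
    · have hl' : l = ((x : ℕ), !bb) := by rw [← negLit_negLit l, h]; rfl
      rw [hl'] at hl
      exact hxd _ hl
    · exact hd l hl h

lemma isCNF_split (F : Finset Clause) (hF : IsCNF F) (x : ℕ) (hx : x ∉ varsF F)
    (s : Bool) (d₁ d₂ : Clause) (hmem : d₁ ∪ d₂ ∈ F) :
    IsCNF (F.erase (d₁ ∪ d₂) ∪ {insert (x, s) d₁, insert (x, !s) d₂}) := by
  have hxd₁ : ∀ bb, (x, bb) ∉ d₁ :=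
    fun bb hb => fresh_not_mem hx hmem bb (Finset.mem_union_left _ hb)
  have hxd₂ : ∀ bb, (x, bb) ∉ d₂ :=
    fun bb hb => fresh_not_mem hx hmem bb (Finset.mem_union_right _ hb)
  have h₁n : NonTauto d₁ := nontauto_subset Finset.subset_union_left (hF _ hmem)
  have h₂n : NonTauto d₂ := nontauto_subset Finset.subset_union_right (hF _ hmem)
  intro E hE
  rcases Finset.mem_union.mp hE with h | h
  · exact hF _ (Finset.mem_of_mem_erase h)
  · rcases Finset.mem_insert.mp h with rfl | h
    · exact nontauto_insert_fresh h₁n hxd₁ s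
    · rw [Finset.mem_singleton] at h
      subst h
      exact nontauto_insert_fresh h₂n hxd₂ (!s)


/-- if the clause `c` of `F` is superredundant in the formula obtained
from `F` by splitting its other clause `c₁ ∪ c₂` over the fresh variable `x`, then
either `c` resolves with both `c₁` and `c₂`, or `c` is superredundant in `F`. -/
theorem split_other_clauses
    (F : Finset Clause) (hF : IsCNF F) (c c₁ c₂ : Clause)
    (h₁ : NonTauto c₁) (h₂ : NonTauto c₂)
    (hc : c ∈ F) (hmem : c₁ ∪ c₂ ∈ F) (hne : c ≠ c₁ ∪ c₂)
    (x : ℕ) (hx : x ∉ varsF F)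
    (hsr : SuperRedundant
      ((F.erase (c₁ ∪ c₂)) ∪ {insert (x, true) c₁, insert (x, false) c₂}) c) :
    (ResolvesWith c c₁ ∧ ResolvesWith c c₂) ∨ SuperRedundant F c := by
  by_cases hR : ResolvesWith c c₁ ∧ ResolvesWith c c₂
  · exact Or.inl hR
  refine Or.inr ?_
  intro v hv
  by_contra hvc
  have hvS : ∀ g, ResCn F g → g ≠ c → satClause v g := by
    intro g hg hgc
    exact hv g ⟨hg, fun h => hgc (by simpa using h)⟩
  have hxc : ∀ bb, (x, bb) ∉ c := fresh_not_mem hx hc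
  have hmem' : c₂ ∪ c₁ ∈ F := by rwa [Finset.union_comm]
  have hset : F.erase (c₂ ∪ c₁) ∪ {insert (x, false) c₂, insert (x, !false) c₁}
      = F.erase (c₁ ∪ c₂) ∪ {insert (x, true) c₁, insert (x, false) c₂} := by
    rw [Finset.union_comm c₂ c₁, Finset.pair_comm]
    rfl
  have hsplit : satClause v c₁ ∨ satClause v c₂ := by
    obtain ⟨q, hq, hqs⟩ := hvS (c₁ ∪ c₂) (ResCn.base hmem) (fun h => hne h.symm)
    rcases Finset.mem_union.mp hq with h | h
    · exact Or.inl ⟨q, h, hqs⟩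
    · exact Or.inr ⟨q, h, hqs⟩
  -- common finishing move, given the main lemma for one of the two sides
  have finish : ∀ bb : Bool,
      (∀ E : Clause,
        ResCn (F.erase (c₁ ∪ c₂) ∪ {insert (x, true) c₁, insert (x, false) c₂}) E →
        (x, !bb) ∉ E → E = c ∨ satClause v (E.erase (x, bb))) → False := by
    intro bb hmain
    apply hvc
    set w : ℕ → Bool := fun n => if n = x then !bb else v n with hw
    have hvw : ∀ q : Lit, q.1 ≠ x → w q.1 = v q.1 := by
      intro q h
      simp only [hw, if_neg h]
    have hwsat : satSet w
        ({d | ResCn (F.erase (c₁ ∪ c₂) ∪ {insert (x, true) c₁, insert (x, false) c₂}) d}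
          \ {c}) := by
      intro E hE
      obtain ⟨hEr, hEc⟩ := hE
      by_cases hxf : (x, !bb) ∈ E
      · refine ⟨(x, !bb), hxf, ?_⟩
        simp only [hw, if_pos rfl]
      · rcases hmain E hEr hxf with hEc' | hs
        · exact absurd hEc' (by simpa using hEc)
        · obtain ⟨q, hq, hqs⟩ := hs
          refine ⟨q, Finset.mem_of_mem_erase hq, ?_⟩
          have hqx : q.1 ≠ x := by
            intro h
            rcases lit_eq_of_var_eq (show q.1 = ((x : ℕ), bb).1 from h) with h' | h'
            · exact (Finset.mem_erase.mp hq).1 h'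
            · have h'' : q = ((x : ℕ), !bb) := h'
              exact hxf (h'' ▸ Finset.mem_of_mem_erase hq)
          rw [hvw q hqx]
          exact hqs
    obtain ⟨q, hq, hqs⟩ := hsr w hwsat
    refine ⟨q, hq, ?_⟩
    have hqx : q.1 ≠ x := by
      intro h
      have he : ((x : ℕ), q.2) = q := by rw [← h]
      exact hxc q.2 (by rw [he]; exact hq)
    rw [← hvw q hqx]
    exact hqs
  by_cases h1 : satClause v c₁
  · by_cases h2 : satClause v c₂
    · rcases not_and_or.mp hR with hR1 | hR2
      · exact finish true (mainLem F hF x hx true c₁ c₂ hmem c hc v hvS hvc h1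
          (Or.inr hR1) (isCNF_split F hF x hx true c₁ c₂ hmem))
      · refine finish false ?_
        have hmain := mainLem F hF x hx false c₂ c₁ hmem' c hc v hvS hvc h2
          (Or.inr hR2) (isCNF_split F hF x hx false c₂ c₁ hmem')
        rw [hset] at hmain
        exact hmain
    · exact finish true (mainLem F hF x hx true c₁ c₂ hmem c hc v hvS hvc h1
        (Or.inl h2) (isCNF_split F hF x hx true c₁ c₂ hmem))
  · have h2 : satClause v c₂ := hsplit.resolve_left h1
    refine finish false ?_
    have hmain := mainLem F hF x hx false c₂ c₁ hmem' c hc v hvS hvc h2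
      (Or.inl h1) (isCNF_split F hF x hx false c₂ c₁ hmem')
    rw [hset] at hmain
    exact hmain
end
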